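/- arXiv:2301.06354 — 9 statements merged into one kernel-verified Lean document; each statement's English description precedes it below -/
import Mathlib

section
/- Let Λ and Λ̃ be two m×r ordered GLT matrices, with pivot rows l_1 < ⋯ < l_r and l̃_1 < ⋯ < l̃_r respectively, such that Λ̃ Λ̃ᵀ = Λ Λᵀ. Then Λ̃ = Λ, and in particular (l̃_1, …, l̃_r) = (l_1, …, l_r). -/
open Matrix

/-- `Λ` is an ordered GLT matrix with pivot rows `l 0 < ... < l (r-1)`:
it has full column rank `r`, in each column `j` all entries strictly above the
pivot row `l j` vanish, and the leading loading `Λ (l j) j` is positive. -/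
def IsOrderedGLTWithPivots {m r : ℕ} (Λ : Matrix (Fin m) (Fin r) ℝ) (l : Fin r → Fin m) : Prop :=
  Λ.rank = r ∧ StrictMono l ∧
    ∀ j : Fin r, (∀ i : Fin m, i < l j → Λ i j = 0) ∧ 0 < Λ (l j) j

/-- Auxiliary identification lemma: the rank hypothesis is not needed. -/
theorem orderedGLT_aux {m : ℕ} :
    ∀ {r : ℕ} (Λ Λt : Matrix (Fin m) (Fin r) ℝ) (l lt : Fin r → Fin m),
      StrictMono l → (∀ j, (∀ i, i < l j → Λ i j = 0) ∧ 0 < Λ (l j) j) →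
      StrictMono lt → (∀ j, (∀ i, i < lt j → Λt i j = 0) ∧ 0 < Λt (lt j) j) →
      Λt * Λtᵀ = Λ * Λᵀ → Λt = Λ ∧ lt = l := by
  intro r
  induction r with
  | zero =>
    intro Λ Λt l lt _ _ _ _ _
    exact ⟨by ext i j; exact j.elim0, funext fun j => j.elim0⟩
  | succ r ih =>
    intro Λ Λt l lt hl hΛ hlt hΛt h
    have key : ∀ {n : ℕ} (A : Matrix (Fin m) (Fin n) ℝ) i k,
        (A * Aᵀ) i k = ∑ j, A i j * A k j := by
      intro n A i k; simp [Matrix.mul_apply, Matrix.transpose_apply]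
    -- rows above the first pivot vanish
    have hrow : ∀ i, i < l 0 → ∀ j, Λ i j = 0 := fun i hi j =>
      (hΛ j).1 i (lt_of_lt_of_le hi (hl.monotone (Fin.zero_le j)))
    have hrowt : ∀ i, i < lt 0 → ∀ j, Λt i j = 0 := fun i hi j =>
      (hΛt j).1 i (lt_of_lt_of_le hi (hlt.monotone (Fin.zero_le j)))
    -- the pivot row of the product at the first pivot
    have hMp : ∀ i, (Λ * Λᵀ) i (l 0) = Λ i 0 * Λ (l 0) 0 := by
      intro i
      rw [key, Fin.sum_univ_succ]
      have hz : ∀ j : Fin r, Λ i j.succ * Λ (l 0) j.succ = 0 := fun j => by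
        rw [(hΛ j.succ).1 (l 0) (hl (Fin.succ_pos j)), mul_zero]
      simp [hz]
    have hMpt : ∀ i, (Λt * Λtᵀ) i (lt 0) = Λt i 0 * Λt (lt 0) 0 := by
      intro i
      rw [key, Fin.sum_univ_succ]
      have hz : ∀ j : Fin r, Λt i j.succ * Λt (lt 0) j.succ = 0 := fun j => by
        rw [(hΛt j.succ).1 (lt 0) (hlt (Fin.succ_pos j)), mul_zero]
      simp [hz]
    -- the first pivots agree
    have hp0 : lt 0 = l 0 := by
      by_contra hne
      rcases lt_or_gt_of_ne hne with hc | hc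
      · have h1 : (Λt * Λtᵀ) (lt 0) (lt 0) = Λt (lt 0) 0 * Λt (lt 0) 0 := hMpt (lt 0)
        have h2 : (Λ * Λᵀ) (lt 0) (lt 0) = 0 := by
          rw [key]
          exact Finset.sum_eq_zero fun j _ => by rw [hrow _ hc j, zero_mul]
        rw [h, h2] at h1
        nlinarith [(hΛt 0).2]
      · have h1 : (Λ * Λᵀ) (l 0) (l 0) = Λ (l 0) 0 * Λ (l 0) 0 := hMp (l 0)
        have h2 : (Λt * Λtᵀ) (l 0) (l 0) = 0 := by
          rw [key]
          exact Finset.sum_eq_zero fun j _ => by rw [hrowt _ hc j, zero_mul]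
        rw [h, h1] at h2
        nlinarith [(hΛ 0).2]
    -- leading loadings agree
    have hsq : Λt (l 0) 0 * Λt (l 0) 0 = Λ (l 0) 0 * Λ (l 0) 0 := by
      have := hMpt (lt 0)
      rw [h, hp0] at this
      rw [← this, hMp (l 0)]
    have hpv : Λt (l 0) 0 = Λ (l 0) 0 := by
      rcases mul_self_eq_mul_self_iff.mp hsq with h' | h'
      · exact h'
      · have h1 := (hΛt 0).2
        rw [hp0] at h1
        nlinarith [(hΛ 0).2]
    -- first columns agree
    have hcol0 : ∀ i, Λt i 0 = Λ i 0 := by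
      intro i
      have h1 := hMpt i
      rw [h, hp0, hMp i, hpv] at h1
      have hne : Λ (l 0) 0 ≠ 0 := ne_of_gt (hΛ 0).2
      exact mul_right_cancel₀ hne h1.symm
    -- peel off the first column and apply the induction hypothesis
    set Λ' : Matrix (Fin m) (Fin r) ℝ := fun i j => Λ i j.succ with hΛ'def
    set Λt' : Matrix (Fin m) (Fin r) ℝ := fun i j => Λt i j.succ with hΛt'def
    have hl' : StrictMono (fun j : Fin r => l j.succ) := fun a b hab =>
      hl (Fin.succ_lt_succ_iff.mpr hab)
    have hlt' : StrictMono (fun j : Fin r => lt j.succ) := fun a b hab =>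
      hlt (Fin.succ_lt_succ_iff.mpr hab)
    have h' : Λt' * Λt'ᵀ = Λ' * Λ'ᵀ := by
      ext i k
      have e1 : (Λ * Λᵀ) i k = Λ i 0 * Λ k 0 + ∑ j : Fin r, Λ' i j * Λ' k j := by
        rw [key, Fin.sum_univ_succ]
      have e2 : (Λt * Λtᵀ) i k = Λt i 0 * Λt k 0 + ∑ j : Fin r, Λt' i j * Λt' k j := by
        rw [key, Fin.sum_univ_succ]
      have e3 : (Λ' * Λ'ᵀ) i k = ∑ j : Fin r, Λ' i j * Λ' k j := key Λ' i k
      have e4 : (Λt' * Λt'ᵀ) i k = ∑ j : Fin r, Λt' i j * Λt' k j := key Λt' i k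
      rw [e3, e4]
      have := congrFun (congrFun h i) k
      rw [e1, e2, hcol0 i, hcol0 k] at this
      linarith
    obtain ⟨hA, hL⟩ := ih Λ' Λt' (fun j => l j.succ) (fun j => lt j.succ) hl'
      (fun j => (hΛ j.succ)) hlt' (fun j => (hΛt j.succ)) h'
    constructor
    · ext i j
      refine Fin.cases ?_ ?_ j
      · exact hcol0 i
      · intro j'
        exact congrFun (congrFun hA i) j'
    · funext j
      refine Fin.cases ?_ ?_ j
      · exact hp0
      · intro j'
        exact congrFun hL j'

/-- Theorem 1: an ordered GLT structure is uniquely identified from its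
cross-covariance matrix. If `Λ` and `Λ̃` are ordered GLT matrices with pivot rows
`l` and `l̃` respectively and `Λ̃ Λ̃ᵀ = Λ Λᵀ`, then `Λ̃ = Λ` and `l̃ = l`. -/
theorem orderedGLT_identification {m r : ℕ}
    (Λ Λt : Matrix (Fin m) (Fin r) ℝ) (l lt : Fin r → Fin m)
    (hΛ : IsOrderedGLTWithPivots Λ l) (hΛt : IsOrderedGLTWithPivots Λt lt)
    (h : Λt * Λtᵀ = Λ * Λᵀ) :
    Λt = Λ ∧ lt = l := by
  exact orderedGLT_aux Λ Λt l lt hΛ.2.1 hΛ.2.2 hΛt.2.1 hΛt.2.2 h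
end

section
/- Let Λ and Λ̃ be two m×r unordered GLT matrices such that Λ̃ Λ̃ᵀ = Λ Λᵀ. Then Λ̃ = Λ P_± P_ρ for some signed permutation matrix P_± P_ρ; i.e., unordered GLT matrices are identified from their cross-covariance matrix up to signed permutations. -/
/-!
Induct on the number of columns. The entries of `Λ Λᵀ` determine which rows of `Λ` vanish, and
every row strictly above all pivots of `Λ` vanishes; hence `Λ` and `Λ̃` have the same smallest pivot
row `i₀`. Row `i₀` of either matrix has a single nonzero entry, so row `i₀` of the Gram matrix
identifies the corresponding column of `Λ̃` with that of `Λ` up to a sign `ε` with `ε² = 1`.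
Removing the two matched columns leaves a rank-one correction that is the same on both sides, so
the reduced matrices again have equal Gram matrices.
-/

open Matrix

/-- `Λ` is an unordered GLT matrix: it has full column rank `r` and pairwise
distinct pivot rows `l j` (in each column `j`, the entries strictly above the
pivot row vanish and the pivot entry is nonzero). -/
def IsUnorderedGLT {m r : ℕ} (Λ : Matrix (Fin m) (Fin r) ℝ) : Prop :=
  Λ.rank = r ∧ ∃ l : Fin r → Fin m, Function.Injective l ∧
    ∀ j : Fin r, (∀ i : Fin m, i < l j → Λ i j = 0) ∧ Λ (l j) j ≠ 0

/-- `P` is a signed permutation matrix, i.e. a product `P_± P_ρ` of a diagonal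
matrix with `±1` diagonal entries and a permutation matrix. -/
def IsSignedPerm {r : ℕ} (P : Matrix (Fin r) (Fin r) ℝ) : Prop :=
  ∃ (σ : Equiv.Perm (Fin r)) (ε : Fin r → ℝ), (∀ j, ε j = 1 ∨ ε j = -1) ∧
    ∀ i j, P i j = if σ i = j then ε i else 0

variable {m R : Type*}

structure IsPivotMap [LinearOrder m] [Zero R] {n : Type*} (A : Matrix m n R) (l : n → m) :
    Prop where
  injective : Function.Injective l
  eq_zero_of_lt : ∀ j i, i < l j → A i j = 0
  ne_zero : ∀ j, A (l j) j ≠ 0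

def IsSignedColumnPerm [Ring R] {n : Type*} (A B : Matrix m n R) : Prop :=
  ∃ (τ : Equiv.Perm n) (ε : n → R), (∀ j, ε j = 1 ∨ ε j = -1) ∧ ∀ i j, B i j = ε j * A i (τ j)

theorem IsUnorderedGLT.exists_isPivotMap {m r : ℕ} {Λ : Matrix (Fin m) (Fin r) ℝ}
    (hΛ : IsUnorderedGLT Λ) : ∃ l, IsPivotMap Λ l := by
  obtain ⟨-, l, hl, hpiv⟩ := hΛ
  exact ⟨l, hl, fun j => (hpiv j).1, fun j => (hpiv j).2⟩

namespace IsPivotMap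

variable [LinearOrder m] [Zero R] {n : Type*} {A : Matrix m n R} {l : n → m}

theorem submatrix {n' : Type*} (hA : IsPivotMap A l) {f : n' → n} (hf : Function.Injective f) :
    IsPivotMap (A.submatrix id f) (l ∘ f) :=
  ⟨hA.injective.comp hf, fun j => hA.eq_zero_of_lt (f j), fun j => hA.ne_zero (f j)⟩

theorem apply_eq_zero_of_forall_lt (hA : IsPivotMap A l) {i : m} (hi : ∀ j, i < l j) (j : n) :
    A i j = 0 :=
  hA.eq_zero_of_lt j i (hi j)

theorem apply_eq_zero_of_ne_of_forall_le (hA : IsPivotMap A l) {j₀ : n} (hj₀ : ∀ j, l j₀ ≤ l j)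
    {j : n} (hj : j ≠ j₀) : A (l j₀) j = 0 :=
  hA.eq_zero_of_lt j _ ((hj₀ j).lt_of_ne fun e => hj (hA.injective e).symm)

end IsPivotMap

section MulTranspose

variable [LinearOrder R] {n n' : Type*} [Fintype n] [Fintype n']

theorem row_eq_zero_of_mul_transpose_eq [Ring R] [IsStrictOrderedRing R] {A : Matrix m n R}
    {B : Matrix m n' R} (h : A * Aᵀ = B * Bᵀ) {i : m} (hA : ∀ j, A i j = 0) (k : n') :
    B i k = 0 := by
  have hdiag : B i ⬝ᵥ B i = 0 := by
    simpa [mul_apply, hA, dotProduct, eq_comm] using congrFun (congrFun h i) i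
  exact congrFun (dotProduct_self_eq_zero.mp hdiag) k

theorem IsPivotMap.exists_le_of_mul_transpose_eq [LinearOrder m] [Ring R] [IsStrictOrderedRing R]
    {A : Matrix m n R} {B : Matrix m n' R} {l : n → m} {l' : n' → m} (hA : IsPivotMap A l)
    (hB : IsPivotMap B l') (h : A * Aᵀ = B * Bᵀ) (k : n') : ∃ j, l j ≤ l' k := by
  by_contra! hk
  exact hB.ne_zero k (row_eq_zero_of_mul_transpose_eq h (hA.apply_eq_zero_of_forall_lt hk) k)

theorem exists_sign_of_mul_transpose_eq [Field R] [IsStrictOrderedRing R] {A : Matrix m n R}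
    {B : Matrix m n' R} (h : A * Aᵀ = B * Bᵀ) {i₀ : m} {j₀ : n} {k₀ : n'}
    (hA : ∀ j, j ≠ j₀ → A i₀ j = 0) (hB : ∀ k, k ≠ k₀ → B i₀ k = 0) (hA₀ : A i₀ j₀ ≠ 0) :
    ∃ ε : R, (ε = 1 ∨ ε = -1) ∧ ∀ i, B i k₀ = ε * A i j₀ := by
  have hrow : ∀ i, A i₀ j₀ * A i j₀ = B i₀ k₀ * B i k₀ := fun i => by
    have := congrFun (congrFun h i₀) i
    simp only [mul_apply, transpose_apply] at this
    rwa [Finset.sum_eq_single j₀ (fun j _ hj => by rw [hA j hj, zero_mul]) (by simp),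
      Finset.sum_eq_single k₀ (fun k _ hk => by rw [hB k hk, zero_mul]) (by simp)] at this
  have hB₀ : B i₀ k₀ ≠ 0 := fun h0 => hA₀ (mul_self_eq_zero.mp (by simpa [h0] using hrow i₀))
  refine ⟨A i₀ j₀ / B i₀ k₀, mul_self_eq_one_iff.mp ?_, fun i => ?_⟩
  · rw [div_mul_div_comm, hrow i₀, div_self (mul_ne_zero hB₀ hB₀)]
  · rw [div_mul_eq_mul_div, hrow i, mul_div_cancel_left₀ _ hB₀]

end MulTranspose

theorem mul_transpose_eq_vecMulVec_add [NonUnitalNonAssocSemiring R] {n : ℕ}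
    (A : Matrix m (Fin (n + 1)) R) (j₀ : Fin (n + 1)) :
    A * Aᵀ = vecMulVec (fun i => A i j₀) (fun i => A i j₀) +
      A.submatrix id j₀.succAbove * (A.submatrix id j₀.succAbove)ᵀ := by
  ext i k
  simp [mul_apply, vecMulVec_apply, Fin.sum_univ_succAbove _ j₀]

theorem submatrix_succAbove_mul_transpose_eq [Ring R] {n : ℕ} {A B : Matrix m (Fin (n + 1)) R}
    (h : A * Aᵀ = B * Bᵀ) {j₀ k₀ : Fin (n + 1)} {ε : R} (hε : ε = 1 ∨ ε = -1)
    (hcol : ∀ i, B i k₀ = ε * A i j₀) :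
    A.submatrix id j₀.succAbove * (A.submatrix id j₀.succAbove)ᵀ =
      B.submatrix id k₀.succAbove * (B.submatrix id k₀.succAbove)ᵀ := by
  have hcol₀ : vecMulVec (fun i => B i k₀) (fun i => B i k₀) =
      vecMulVec (fun i => A i j₀) (fun i => A i j₀) := by
    ext i k
    rcases hε with rfl | rfl <;> simp [vecMulVec_apply, hcol]
  rw [mul_transpose_eq_vecMulVec_add A j₀, mul_transpose_eq_vecMulVec_add B k₀, hcol₀] at h
  exact add_left_cancel h

theorem IsSignedColumnPerm.of_submatrix_succAbove [Ring R] {n : ℕ} {A B : Matrix m (Fin (n + 1)) R}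
    {j₀ k₀ : Fin (n + 1)} {ε₀ : R} (hε₀ : ε₀ = 1 ∨ ε₀ = -1) (hcol : ∀ i, B i k₀ = ε₀ * A i j₀)
    (h : IsSignedColumnPerm (A.submatrix id j₀.succAbove) (B.submatrix id k₀.succAbove)) :
    IsSignedColumnPerm A B := by
  obtain ⟨τ, ε, hε, hτ⟩ := h
  refine ⟨(finSuccEquiv' k₀).trans ((Equiv.optionCongr τ).trans (finSuccEquiv' j₀).symm),
    fun j => (finSuccEquiv' k₀ j).elim ε₀ ε, fun j => ?_, fun i j => ?_⟩ <;>
  rcases eq_or_ne j k₀ with rfl | hj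
  · simpa using hε₀
  · obtain ⟨j, rfl⟩ := Fin.exists_succAbove_eq hj
    simpa using hε j
  · simpa using hcol i
  · obtain ⟨j, rfl⟩ := Fin.exists_succAbove_eq hj
    simpa using hτ i j

theorem IsPivotMap.isSignedColumnPerm_of_mul_transpose_eq [LinearOrder m] [Field R] [LinearOrder R]
    [IsStrictOrderedRing R] :
    ∀ {n : ℕ} {A B : Matrix m (Fin n) R} {l l' : Fin n → m}, IsPivotMap A l → IsPivotMap B l' →
      A * Aᵀ = B * Bᵀ → IsSignedColumnPerm A B
  | 0, _, _, _, _, _, _, _ => ⟨1, fun _ => 1, finZeroElim, fun _ j => j.elim0⟩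
  | n + 1, A, B, l, l', hA, hB, h => by
    obtain ⟨j₀, hj₀⟩ := Finite.exists_min l
    obtain ⟨k₀, hk₀⟩ := Finite.exists_min l'
    have hpiv : l j₀ = l' k₀ := by
      obtain ⟨j, hj⟩ := hA.exists_le_of_mul_transpose_eq hB h k₀
      obtain ⟨k, hk⟩ := hB.exists_le_of_mul_transpose_eq hA h.symm j₀
      exact le_antisymm ((hj₀ j).trans hj) ((hk₀ k).trans hk)
    obtain ⟨ε, hε, hcol⟩ := exists_sign_of_mul_transpose_eq h
      (fun j hj => hA.apply_eq_zero_of_ne_of_forall_le hj₀ hj)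
      (fun k hk => hpiv ▸ hB.apply_eq_zero_of_ne_of_forall_le hk₀ hk) (hA.ne_zero j₀)
    exact .of_submatrix_succAbove hε hcol <| isSignedColumnPerm_of_mul_transpose_eq
      (hA.submatrix Fin.succAbove_right_injective) (hB.submatrix Fin.succAbove_right_injective)
      (submatrix_succAbove_mul_transpose_eq h hε hcol)

theorem IsSignedColumnPerm.exists_isSignedPerm {r : ℕ} {A B : Matrix m (Fin r) ℝ}
    (h : IsSignedColumnPerm A B) :
    ∃ P : Matrix (Fin r) (Fin r) ℝ, IsSignedPerm P ∧ B = A * P := by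
  obtain ⟨τ, ε, hε, hτ⟩ := h
  refine ⟨of fun k j => if τ.symm k = j then ε (τ.symm k) else 0,
    ⟨τ.symm, ε ∘ τ.symm, fun j => hε _, fun _ _ => rfl⟩, ?_⟩
  ext i j
  rw [hτ]
  simp [mul_apply, Equiv.symm_apply_eq, mul_comm]

/-- Unordered GLT matrices are identified from their cross-covariance matrix up
to signed permutations: if `Λ̃ Λ̃ᵀ = Λ Λᵀ` for unordered GLT matrices `Λ`, `Λ̃`,
then `Λ̃ = Λ P_± P_ρ` for some signed permutation matrix. -/
theorem unorderedGLT_identification {m r : ℕ}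
    (Λ Λt : Matrix (Fin m) (Fin r) ℝ)
    (hΛ : IsUnorderedGLT Λ) (hΛt : IsUnorderedGLT Λt)
    (h : Λt * Λtᵀ = Λ * Λᵀ) :
    ∃ P : Matrix (Fin r) (Fin r) ℝ, IsSignedPerm P ∧ Λt = Λ * P := by
  obtain ⟨l, hl⟩ := hΛ.exists_isPivotMap
  obtain ⟨lt, hlt⟩ := hΛt.exists_isPivotMap
  exact (hl.isSignedColumnPerm_of_mul_transpose_eq hlt h.symm).exists_isSignedPerm
end

section
/- Let β be a real m×r matrix of full column rank r. Then there exists a unique pair (Λ, G) where G is an r×r orthogonal matrix and Λ = β G is an ordered GLT matrix; equivalently, β = Λ Gᵀ. The matrix Λ is called the GLT representation of β. -/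
open Matrix

/-- `Λ` is an ordered GLT matrix. -/
def IsOrderedGLT {m r : ℕ} (Λ : Matrix (Fin m) (Fin r) ℝ) : Prop :=
  ∃ l : Fin r → Fin m, IsOrderedGLTWithPivots Λ l

/-! Existence: Gram–Schmidt applied to the rows `β 0, β 1, …` of `β` yields a unit vector exactly
at the rows that are not in the span of the earlier ones. Since `β` has rank `r` there are `r`
such pivot rows, and their Gram–Schmidt vectors form the columns of an orthogonal `G`; the entry
`(β * G) i j` is the inner product of row `i` with the `j`-th of them, which vanishes above the
`j`-th pivot row and is positive on it.

Uniqueness: if `Λ` and `Λ * Q` are both ordered GLT with `Q` orthogonal, comparing the dimensions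
of the spans of their first rows shows that they have the same pivot rows. On the pivot rows both
are invertible lower triangular, so `Q` and `Q⁻¹ = Qᵀ` are lower triangular. Hence `Q` is diagonal
with entries `±1`, and the positive leading loadings force `Q = 1`. -/

open Module Submodule Finset InnerProductSpace

theorem finrank_span_le_card_of_support_subset {K ι : Type*} [Field K] [Fintype ι]
    (s : Set (ι → K)) (t : Finset ι) (h : ∀ v ∈ s, ∀ i ∉ t, v i = 0) :
    finrank K (span K s) ≤ #t := by
  classical
  let b := Pi.basisFun K ι
  have hle : span K s ≤ span K (t.image b : Set (ι → K)) := by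
    rw [span_le, coe_image]
    intro v hv
    rw [SetLike.mem_coe, b.mem_span_image]
    intro i hi
    by_contra hit
    simp [b, h v hv i hit] at hi
  exact (Submodule.finrank_mono hle).trans ((finrank_span_finset_le_card _).trans card_image_le)

section GramSchmidt

variable {𝕜 E ι : Type*} [RCLike 𝕜] [NormedAddCommGroup E] [InnerProductSpace 𝕜 E]
  [LinearOrder ι] [LocallyFiniteOrderBot ι] [WellFoundedLT ι]

theorem inner_gramSchmidt_self (f : ι → E) (n : ι) :
    inner 𝕜 (gramSchmidt 𝕜 f n) (f n) = (‖gramSchmidt 𝕜 f n‖ : 𝕜) ^ 2 := by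
  conv_lhs => rw [gramSchmidt_def'' 𝕜 f n]
  rw [inner_add_right, inner_self_eq_norm_sq_to_K, inner_sum, add_eq_left]
  refine sum_eq_zero fun i hi => ?_
  rw [inner_smul_right, gramSchmidt_orthogonal 𝕜 f (mem_Iio.1 hi).ne', mul_zero]

theorem inner_gramSchmidtNormed_self (f : ι → E) (n : ι) :
    inner 𝕜 (gramSchmidtNormed 𝕜 f n) (f n) = ‖gramSchmidt 𝕜 f n‖ := by
  rw [gramSchmidtNormed, inner_smul_left, inner_gramSchmidt_self, map_inv₀, RCLike.conj_ofReal]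
  rcases eq_or_ne ‖gramSchmidt 𝕜 f n‖ 0 with h | h
  · simp [h]
  · field_simp

theorem gramSchmidtNormed_inv_triangular (f : ι → E) {i j : ι} (hij : i < j) :
    inner 𝕜 (gramSchmidtNormed 𝕜 f j) (f i) = 0 := by
  rw [gramSchmidtNormed, inner_smul_left, gramSchmidt_inv_triangular 𝕜 f hij, mul_zero]

end GramSchmidt

theorem exists_pivots_orthonormal_inner_triangular {ι E : Type*} [LinearOrder ι] [Fintype ι]
    [LocallyFiniteOrderBot ι] [NormedAddCommGroup E] [InnerProductSpace ℝ E] {r : ℕ}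
    (hr : finrank ℝ E = r) (f : ι → E) (hf : span ℝ (Set.range f) = ⊤) :
    ∃ (l : Fin r → ι) (e : Fin r → E), StrictMono l ∧ Orthonormal ℝ e ∧
      ∀ j, (∀ i < l j, inner ℝ (e j) (f i) = 0) ∧ 0 < inner ℝ (e j) (f (l j)) := by
  classical
  set g := gramSchmidtNormed ℝ f
  let S : Set ι := {i | g i ≠ 0}
  have hon : Orthonormal ℝ fun i : S => g i := gramSchmidtNormed_orthonormal' f
  have hspan : span ℝ (Set.range fun i : S => g i) = ⊤ := by
    have : Set.range (fun i : S => g i) = Set.range g \ {0} := by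
      ext v
      simp only [Set.mem_range, Set.mem_sdiff, Set.mem_singleton_iff, Subtype.exists, S,
        Set.mem_ofPred_eq, exists_prop]
      grind
    rw [this, span_sdiff_singleton_zero, span_gramSchmidtNormed_range, span_gramSchmidt, hf]
  have hcard : #S.toFinset = r := by
    rw [Set.toFinset_card, ← finrank_span_eq_card hon.linearIndependent, hspan, finrank_top, hr]
  let l := S.toFinset.orderEmbOfFin hcard
  have hlS (j : Fin r) : g (l j) ≠ 0 := Set.mem_toFinset.1 (S.toFinset.orderEmbOfFin_mem hcard j)
  refine ⟨l, fun j => g (l j), l.strictMono,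
    hon.comp (fun j => ⟨l j, hlS j⟩) fun _ _ h => l.strictMono.injective (Subtype.mk.inj h),
    fun j => ⟨fun i hi => gramSchmidtNormed_inv_triangular f hi, ?_⟩⟩
  rw [inner_gramSchmidtNormed_self, RCLike.ofReal_real_eq_id, id]
  refine norm_pos_iff.2 fun h => hlS j ?_
  simp [g, gramSchmidtNormed, h]

theorem Matrix.span_toLp_rows_eq_top {m r : ℕ} {β : Matrix (Fin m) (Fin r) ℝ} (hβ : β.rank = r) :
    span ℝ (Set.range fun i => WithLp.toLp 2 (β i)) = ⊤ := by
  have hrow : span ℝ (Set.range β.row) = ⊤ := by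
    apply eq_top_of_finrank_eq
    rw [← rank_eq_finrank_span_row, hβ, finrank_fin_fun]
  have : (Set.range fun i => WithLp.toLp 2 (β i)) =
      (WithLp.linearEquiv 2 ℝ (Fin r → ℝ)).symm '' Set.range β.row := by
    rw [← Set.range_comp]; rfl
  rw [this, span_image_linearEquiv, hrow, Submodule.map_top, LinearEquiv.range]

theorem Matrix.transpose_mul_self_eq_one_of_orthonormal {ι κ : Type*} [Fintype ι] [DecidableEq ι]
    [Fintype κ] {e : ι → EuclideanSpace ℝ κ} (he : Orthonormal ℝ e) :
    (of fun k j => e j k)ᵀ * of (fun k j => e j k) = 1 := by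
  ext j j'
  rw [orthonormal_iff_ite] at he
  simpa [mul_apply, PiLp.inner_apply, one_apply, mul_comm] using he j j'

theorem exists_orthogonal_isOrderedGLT_mul {m r : ℕ} {β : Matrix (Fin m) (Fin r) ℝ}
    (hβ : β.rank = r) : ∃ G : Matrix (Fin r) (Fin r) ℝ, G * Gᵀ = 1 ∧ IsOrderedGLT (β * G) := by
  obtain ⟨l, e, hl, he, hpiv⟩ := exists_pivots_orthonormal_inner_triangular
    (finrank_euclideanSpace_fin) _ (span_toLp_rows_eq_top hβ)
  set G : Matrix (Fin r) (Fin r) ℝ := of fun k j => e j k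
  have hG : G * Gᵀ = 1 := mul_eq_one_comm.1 (transpose_mul_self_eq_one_of_orthonormal he)
  have hentry (i j) : (β * G) i j = inner ℝ (e j) (WithLp.toLp 2 (β i)) := by
    simp [G, mul_apply, PiLp.inner_apply]
  refine ⟨G, hG, l, ?_, hl, fun j => ⟨fun i hi => (hentry i j).trans ((hpiv j).1 i hi), ?_⟩⟩
  · rw [rank_mul_eq_left_of_isUnit_det, hβ]
    exact isUnit_det_of_right_inverse hG
  · exact (hentry _ j).symm ▸ (hpiv j).2

namespace IsOrderedGLTWithPivots

variable {m r : ℕ} {Λ : Matrix (Fin m) (Fin r) ℝ} {l l' : Fin r → Fin m}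
  {Q : Matrix (Fin r) (Fin r) ℝ}

theorem isLowerTriangular_submatrix (h : IsOrderedGLTWithPivots Λ l) :
    (Λ.submatrix l id).IsLowerTriangular :=
  fun _ k hjk => (h.2.2 k).1 _ (h.2.1 hjk)

theorem isUnit_submatrix (h : IsOrderedGLTWithPivots Λ l) : IsUnit (Λ.submatrix l id) := by
  rw [isUnit_iff_isUnit_det, det_of_isLowerTriangular _ h.isLowerTriangular_submatrix]
  exact (prod_pos fun j _ => (h.2.2 j).2).ne'.isUnit

theorem linearIndependent_rows (h : IsOrderedGLTWithPivots Λ l) :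
    LinearIndependent ℝ fun j => Λ (l j) :=
  linearIndependent_rows_of_isUnit h.isUnit_submatrix

theorem pivot_le_of_mul (h : IsOrderedGLTWithPivots Λ l) (h' : IsOrderedGLTWithPivots (Λ * Q) l')
    (j : Fin r) : l j ≤ l' j := by
  -- If `l' j < l j`, the rows `l' 0, …, l' j` of `Λ` vanish in the columns `≥ j`, yet they stay
  -- independent after multiplication by `Q`.
  by_contra! hlt
  let s := Iic j
  have hind : LinearIndependent ℝ fun k : s => (Λ * Q) (l' k) :=
    h'.linearIndependent_rows.comp _ Subtype.val_injective
  have hvanish : ∀ v ∈ Set.range fun k : s => Λ (l' k), ∀ c ∉ Iio j, v c = 0 := by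
    rintro _ ⟨k, rfl⟩ c hc
    have hkj : l' k ≤ l' j := h'.2.1.monotone (mem_Iic.1 k.2)
    have hjc : l j ≤ l c := h.2.1.monotone (not_lt.1 (mt mem_Iio.2 hc))
    exact (h.2.2 c).1 _ (hkj.trans_lt (hlt.trans_le hjc))
  have hrange : Set.range (fun k : s => (Λ * Q) (l' k)) =
      vecMulLinear Q '' Set.range fun k : s => Λ (l' k) := by
    rw [← Set.range_comp]; rfl
  have := calc (j : ℕ) + 1 = Fintype.card s := by rw [Fintype.card_coe, Fin.card_Iic]
    _ = finrank ℝ (span ℝ (Set.range fun k : s => (Λ * Q) (l' k))) :=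
      (finrank_span_eq_card hind).symm
    _ ≤ finrank ℝ (span ℝ (Set.range fun k : s => Λ (l' k))) := by
      rw [hrange, span_image]; exact finrank_map_le _ _
    _ ≤ #(Iio j) := finrank_span_le_card_of_support_subset _ _ hvanish
    _ = j := Fin.card_Iio j
  omega

theorem isLowerTriangular_of_mul (h : IsOrderedGLTWithPivots Λ l)
    (h' : IsOrderedGLTWithPivots (Λ * Q) l) : Q.IsLowerTriangular := by
  have := h.isUnit_submatrix.invertible
  have hQ : Q = (Λ.submatrix l id)⁻¹ * (Λ * Q).submatrix l id := by
    rw [show (Λ * Q).submatrix l id = Λ.submatrix l id * Q from rfl,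
      inv_mul_cancel_left_of_invertible]
  rw [hQ]
  exact (blockTriangular_inv_of_blockTriangular h.isLowerTriangular_submatrix).mul
    h'.isLowerTriangular_submatrix

theorem eq_one_of_mul (h : IsOrderedGLTWithPivots Λ l) (h' : IsOrderedGLTWithPivots (Λ * Q) l')
    (hQ : Q * Qᵀ = 1) : Q = 1 := by
  have h'' : IsOrderedGLTWithPivots (Λ * Q * Qᵀ) l := by
    rwa [Matrix.mul_assoc, hQ, Matrix.mul_one]
  obtain rfl : l = l' := funext fun j =>
    (h.pivot_le_of_mul h' j).antisymm (h'.pivot_le_of_mul h'' j)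
  have hlow := h.isLowerTriangular_of_mul h'
  have hup := h'.isLowerTriangular_of_mul h''
  obtain ⟨d, rfl⟩ : ∃ d, Q = diagonal d := by
    refine ⟨Q.diag, (IsDiag.diagonal_diag fun i j hij => ?_).symm⟩
    rcases hij.lt_or_gt with hij | hij
    · exact hlow (OrderDual.toDual_lt_toDual.2 hij)
    · exact hup (OrderDual.toDual_lt_toDual.2 hij)
  have hsq : ∀ j, d j * d j = 1 := fun j => by
    simpa using congrFun₂ hQ j j
  have hpos : ∀ j, 0 < d j := fun j => by
    have := (h'.2.2 j).2
    rw [mul_diagonal] at this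
    exact pos_of_mul_pos_right this (h.2.2 j).2.le
  rw [← diagonal_one]
  congr 1
  funext j
  nlinarith [hsq j, hpos j]

end IsOrderedGLTWithPivots

/-- Theorem 2(a) (rotation into GLT): every full column rank matrix `β` has a
unique representation `β = Λ Gᵀ` (equivalently `Λ = β G`) with `G` orthogonal and
`Λ` an ordered GLT matrix, called the GLT representation of `β`. -/
theorem glt_representation_exists_unique {m r : ℕ}
    (β : Matrix (Fin m) (Fin r) ℝ) (hβ : β.rank = r) :
    ∃! ΛG : Matrix (Fin m) (Fin r) ℝ × Matrix (Fin r) (Fin r) ℝ,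
      ΛG.2 * ΛG.2ᵀ = 1 ∧ ΛG.1 = β * ΛG.2 ∧ IsOrderedGLT ΛG.1 := by
  obtain ⟨G, hG, l, hl⟩ := exists_orthogonal_isOrderedGLT_mul hβ
  refine ⟨(β * G, G), ⟨hG, rfl, l, hl⟩, ?_⟩
  rintro ⟨Λ', G'⟩ ⟨hG', hΛ', l', hl'⟩
  dsimp only at hG' hΛ' hl'
  subst hΛ'
  have hGG : Gᵀ * G = 1 := mul_eq_one_comm.1 hG
  have hG'_eq : G' = G * (Gᵀ * G') := by rw [← Matrix.mul_assoc, hG, Matrix.one_mul]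
  have hQ : Gᵀ * G' * (Gᵀ * G')ᵀ = 1 := by
    rw [transpose_mul, transpose_transpose, Matrix.mul_assoc, ← Matrix.mul_assoc G', hG',
      Matrix.one_mul, hGG]
  rw [hG'_eq, ← Matrix.mul_assoc] at hl'
  have hQ1 : Gᵀ * G' = 1 := hl.eq_one_of_mul hl' hQ
  rw [hG'_eq, hQ1, Matrix.mul_one]
end

section
/- Let β be a real m×r matrix of full column rank r, let Λ = β G be its unique ordered GLT representation with G orthogonal, let l_1 < ⋯ < l_r be the pivot rows of Λ, and let β_1 be the r×r submatrix of β consisting of rows l_1, …, l_r. If Q is an r×r orthogonal matrix and R is an r×r upper triangular matrix with strictly positive diagonal entries such that Q R = β_1ᵀ (a QR decomposition of β_1ᵀ), then G = Q; i.e., the rotation into GLT is given by Λ = β Q. -/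
open Matrix

/-- An orthogonal, upper triangular matrix with positive diagonal is the identity. -/
lemma orth_upper_pos_eq_one {r : ℕ} (A : Matrix (Fin r) (Fin r) ℝ)
    (hA : A * Aᵀ = 1) (htri : A.BlockTriangular id) (hpos : ∀ i, 0 < A i i) :
    A = 1 := by
  have hunit : IsUnit A.det := by
    rw [det_of_upperTriangular htri]
    exact (Finset.prod_pos (fun i _ => hpos i)).ne'.isUnit
  haveI : Invertible A := A.invertibleOfIsUnitDet hunit
  have hinv : A⁻¹ = Aᵀ := inv_eq_right_inv hA
  have htri' : Aᵀ.BlockTriangular id := hinv ▸ blockTriangular_inv_of_blockTriangular htri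
  -- A is diagonal
  have hdiag : ∀ i j : Fin r, i ≠ j → A i j = 0 := by
    intro i j hij
    rcases lt_or_gt_of_ne hij with h | h
    · simpa using htri' h
    · exact htri h
  have h1 : ∀ i, A i i * A i i = 1 := by
    intro i
    have := congrFun (congrFun hA i) i
    rw [Matrix.mul_apply] at this
    rw [Finset.sum_eq_single i (fun k _ hk => by simp [hdiag i k (Ne.symm hk)]) (by simp)] at this
    simpa using this
  ext i j
  rcases eq_or_ne i j with rfl | hij
  · have := h1 i
    have hAi := hpos i
    have : A i i = 1 := by nlinarith
    simp [this]
  · simp [hdiag i j hij, Matrix.one_apply_ne hij]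

/-- Theorem 2(b): let `β` have full column rank `r`, let `Λ = β G` (with `G`
orthogonal) be its ordered GLT representation with pivot rows `l`, and let
`β₁ = β.submatrix l id` be the submatrix of the pivot rows. If `Q R = β₁ᵀ` is a QR
decomposition of `β₁ᵀ` (`Q` orthogonal, `R` upper triangular with strictly
positive diagonal), then `G = Q`; i.e. the rotation into GLT is `Λ = β Q`. -/
theorem rotation_into_GLT_via_QR {m r : ℕ}
    (β : Matrix (Fin m) (Fin r) ℝ) (hβ : β.rank = r)
    (G : Matrix (Fin r) (Fin r) ℝ) (hG : G * Gᵀ = 1)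
    (l : Fin r → Fin m) (hGLT : IsOrderedGLTWithPivots (β * G) l)
    (Q R : Matrix (Fin r) (Fin r) ℝ)
    (hQ : Q * Qᵀ = 1)
    (hRtri : ∀ i j : Fin r, j < i → R i j = 0)
    (hRpos : ∀ i : Fin r, 0 < R i i)
    (hQR : Q * R = (β.submatrix l id)ᵀ) :
    G = Q := by
  obtain ⟨-, hmono, hpiv⟩ := hGLT
  set β₁ := β.submatrix l id with hβ₁
  set L := (β * G).submatrix l id with hL
  -- L = β₁ * G
  have hβ₁G : β₁ * G = L := by
    ext i j
    simp [Matrix.mul_apply, hβ₁, hL]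
  -- L is lower triangular with positive diagonal
  have hLtri : ∀ i j : Fin r, i < j → L i j = 0 :=
    fun i j h => (hpiv j).1 (l i) (hmono h)
  have hLpos : ∀ i : Fin r, 0 < L i i := fun i => (hpiv i).2
  -- U := Lᵀ is upper triangular with positive diagonal
  set U := Lᵀ with hU
  have hUtri : U.BlockTriangular id := fun i j h => hLtri j i h
  have hUpos : ∀ i : Fin r, 0 < U i i := hLpos
  have hUunit : IsUnit U.det := by
    rw [det_of_upperTriangular hUtri]
    exact (Finset.prod_pos (fun i _ => hUpos i)).ne'.isUnit
  haveI : Invertible U := U.invertibleOfIsUnitDet hUunit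
  -- orthogonality both ways
  have hG' : Gᵀ * G = 1 := mul_eq_one_comm.mp hG
  have hQ' : Qᵀ * Q = 1 := mul_eq_one_comm.mp hQ
  -- β₁ᵀ = G * U
  have hβ₁T : β₁ᵀ = G * U := by
    have : β₁ = L * Gᵀ := by
      calc β₁ = β₁ * (G * Gᵀ) := by rw [hG, Matrix.mul_one]
        _ = (β₁ * G) * Gᵀ := by rw [Matrix.mul_assoc]
        _ = L * Gᵀ := by rw [hβ₁G]
    rw [this, Matrix.transpose_mul, Matrix.transpose_transpose, hU]
  -- A := Qᵀ * G satisfies A * U = R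
  set A := Qᵀ * G with hA
  have hAU : A * U = R := by
    have : Q * R = G * U := by rw [hQR, hβ₁T]
    calc A * U = Qᵀ * (G * U) := by rw [hA, Matrix.mul_assoc]
      _ = Qᵀ * (Q * R) := by rw [this]
      _ = (Qᵀ * Q) * R := by rw [Matrix.mul_assoc]
      _ = R := by rw [hQ', Matrix.one_mul]
  have hAeq : A = R * U⁻¹ := by
    rw [← hAU, Matrix.mul_assoc, Matrix.mul_nonsing_inv U hUunit, Matrix.mul_one]
  -- A is upper triangular
  have hRtri' : (R : Matrix (Fin r) (Fin r) ℝ).BlockTriangular id := fun i j h => hRtri i j h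
  have hUinvtri : (U⁻¹).BlockTriangular id := blockTriangular_inv_of_blockTriangular hUtri
  have hAtri : A.BlockTriangular id := hAeq ▸ hRtri'.mul hUinvtri
  -- A is orthogonal
  have hAorth : A * Aᵀ = 1 := by
    calc A * Aᵀ = Qᵀ * (G * Gᵀ) * Q := by
          rw [hA, Matrix.transpose_mul, Matrix.transpose_transpose, Matrix.mul_assoc,
            Matrix.mul_assoc, Matrix.mul_assoc]
      _ = Qᵀ * Q := by rw [hG, Matrix.mul_one]
      _ = 1 := hQ'
  -- diagonal of A is positive
  have hUinvpos : ∀ i, 0 < U⁻¹ i i := by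
    intro i
    have h1 : (U * U⁻¹) i i = 1 := by rw [Matrix.mul_nonsing_inv U hUunit]; simp
    rw [Matrix.mul_apply] at h1
    rw [Finset.sum_eq_single i
      (fun k _ hk => by
        rcases lt_or_gt_of_ne hk with h | h
        · rw [hUtri h, zero_mul]
        · rw [hUinvtri h, mul_zero]) (by simp)] at h1
    have := hUpos i
    nlinarith [mul_pos_iff.mp (by rw [h1]; norm_num : (0:ℝ) < U i i * U⁻¹ i i)]
  have hApos : ∀ i, 0 < A i i := by
    intro i
    have : A i i = R i i * U⁻¹ i i := by
      rw [hAeq, Matrix.mul_apply]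
      exact Finset.sum_eq_single i
        (fun k _ hk => by
          rcases lt_or_gt_of_ne hk with h | h
          · rw [hRtri i k h, zero_mul]
          · rw [hUinvtri h, mul_zero]) (by simp)
    rw [this]
    exact mul_pos (hRpos i) (hUinvpos i)
  have hA1 : A = 1 := orth_upper_pos_eq_one A hAorth hAtri hApos
  calc G = (Q * Qᵀ) * G := by rw [hQ, Matrix.one_mul]
    _ = Q * A := by rw [Matrix.mul_assoc, hA]
    _ = Q := by rw [hA1, Matrix.mul_one]
end

section
/- Let Λ_0 be an m×r PLT matrix, i.e., an ordered GLT matrix whose pivot rows are l_j = j for j = 1, …, r, and let P be an r×r orthogonal matrix. Then the unique ordered GLT representation of β = Λ_0 P equals Λ_0; i.e., whenever a PLT representation of β exists, the GLT representation automatically reduces to it. -/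
open Matrix

/-! If `Λ` and `Λ * Q` are both ordered GLT and `Q` is orthogonal, let `s j` be the first nonzero
row of column `j` of `Q`. The pivot row of column `j` of `Λ * Q` is then the pivot row of column
`s j` of `Λ`; as both pivot sequences increase, `s` is a strictly monotone self-map of `Fin r`,
i.e. the identity. So `Q` is lower triangular with positive diagonal, and the only orthogonal
such matrix is `1`.

Pivot rows of columns are expressed as leading entries (`Matrix.IsLeadingEntry`) of the rows of
the transpose. -/

namespace Matrix

section LeadingEntry

variable {l m n R : Type*} [Fintype m] [LinearOrder m] [LinearOrder n]
  {A : Matrix l m R} {B : Matrix m n R} {e : m → n} {i : l} {s : m}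

theorem IsLeadingEntry.mul_apply_of_lt [NonUnitalNonAssocSemiring R] (he : Monotone e)
    (hB : ∀ k, B.IsLeadingEntry k (e k)) (hA : A.IsLeadingEntry i s) {c : n} (hc : c < e s) :
    (A * B) i c = 0 := by
  refine Matrix.mul_apply.trans (Finset.sum_eq_zero fun k _ => ?_)
  rcases lt_or_ge k s with hk | hk
  · rw [hA.1 k hk, zero_mul]
  · rw [(hB k).1 c (hc.trans_le (he hk)), mul_zero]

theorem IsLeadingEntry.mul_apply [NonUnitalNonAssocSemiring R] (he : StrictMono e)
    (hB : ∀ k, B.IsLeadingEntry k (e k)) (hA : A.IsLeadingEntry i s) :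
    (A * B) i (e s) = A i s * B s (e s) := by
  refine Matrix.mul_apply.trans (Finset.sum_eq_single s (fun k _ hks => ?_) (by simp))
  rcases hks.lt_or_gt with hk | hk
  · rw [hA.1 k hk, zero_mul]
  · rw [(hB k).1 _ (he hk), mul_zero]

theorem IsLeadingEntry.mul [NonUnitalNonAssocSemiring R] [NoZeroDivisors R] (he : StrictMono e)
    (hB : ∀ k, B.IsLeadingEntry k (e k)) (hA : A.IsLeadingEntry i s) :
    (A * B).IsLeadingEntry i (e s) :=
  ⟨fun _ hc => hA.mul_apply_of_lt he.monotone hB hc, by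
    rw [hA.mul_apply he hB]; exact mul_ne_zero hA.2 (hB s).2⟩

end LeadingEntry

theorem isLeadingEntry_self_of_isLeadingEntry_mul {n p R : Type*} [Fintype n] [LinearOrder n]
    [LinearOrder p] [NonUnitalNonAssocSemiring R] [NoZeroDivisors R]
    {A : Matrix n n R} {B : Matrix n p R} {e l : n → p} (he : StrictMono e)
    (hB : ∀ k, B.IsLeadingEntry k (e k)) (hA : ∀ j, A j ≠ 0) (hl : StrictMono l)
    (hAB : ∀ j, (A * B).IsLeadingEntry j (l j)) (j : n) : A.IsLeadingEntry j j := by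
  choose s hs using fun j => row_ne_zero_iff_exists_isLeadingEntry.mp (hA j)
  have hls : ∀ j, l j = e (s j) := fun j => (hAB j).unique ((hs j).mul he hB)
  have hs_mono : StrictMono s := fun a b hab => he.lt_iff_lt.mp (by simpa [hls] using hl hab)
  simpa [hs_mono.apply_eq] using hs j

theorem row_ne_zero_of_mul_eq_one {n R : Type*} [Fintype n] [DecidableEq n] [NonAssocSemiring R]
    [Nontrivial R] {A B : Matrix n n R} (h : A * B = 1) (i : n) : A i ≠ 0 := by
  intro hi
  have := congrFun (congrFun h i) i
  simp [mul_apply, hi] at this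

theorem IsLowerTriangular.eq_one_of_mul_transpose_eq_one {n R : Type*} [Fintype n]
    [LinearOrder n] [CommRing R] [LinearOrder R] [IsStrictOrderedRing R] {Q : Matrix n n R}
    (hQ : Q.IsLowerTriangular) (hQQ : Q * Qᵀ = 1) (hd : ∀ i, 0 < Q i i) : Q = 1 := by
  have : Invertible Q := invertibleOfRightInverse Q Qᵀ hQQ
  have hQT : Qᵀ.IsLowerTriangular :=
    inv_eq_right_inv hQQ ▸ blockTriangular_inv_of_blockTriangular hQ
  have hdiag : Q.IsDiag := fun i j hij => by
    rcases hij.lt_or_gt with h | h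
    · exact hQ h
    · exact hQT h
  rw [← hdiag.diagonal_diag, diagonal_transpose, diagonal_mul_diagonal, ← diagonal_one,
    diagonal_eq_diagonal_iff] at hQQ
  rw [← hdiag.diagonal_diag, ← diagonal_one, diagonal_eq_diagonal_iff]
  exact fun i => (mul_self_eq_one_iff.mp (hQQ i)).resolve_right (neg_one_lt_zero.trans (hd i)).ne'

end Matrix

theorem IsOrderedGLTWithPivots.isLeadingEntry_transpose {m r : ℕ}
    {Λ : Matrix (Fin m) (Fin r) ℝ} {l : Fin r → Fin m} (hΛ : IsOrderedGLTWithPivots Λ l) (j : Fin r) :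
    Λᵀ.IsLeadingEntry j (l j) :=
  ⟨(hΛ.2.2 j).1, (hΛ.2.2 j).2.ne'⟩

theorem IsOrderedGLTWithPivots.eq_one_of_mul_s4 {m r : ℕ} {Λ : Matrix (Fin m) (Fin r) ℝ}
    {l l' : Fin r → Fin m} (hΛ : IsOrderedGLTWithPivots Λ l) {Q : Matrix (Fin r) (Fin r) ℝ}
    (hQ : Q * Qᵀ = 1) (hΛQ : IsOrderedGLTWithPivots (Λ * Q) l') : Q = 1 := by
  have hlead := hΛ.isLeadingEntry_transpose
  have hlead' : ∀ j, (Qᵀ * Λᵀ).IsLeadingEntry j (l' j) := by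
    rw [← transpose_mul]; exact hΛQ.isLeadingEntry_transpose
  have hdiag : ∀ j, Qᵀ.IsLeadingEntry j j :=
    isLeadingEntry_self_of_isLeadingEntry_mul hΛ.2.1 hlead
      (row_ne_zero_of_mul_eq_one (mul_eq_one_comm.mp hQ)) hΛQ.2.1 hlead'
  refine IsLowerTriangular.eq_one_of_mul_transpose_eq_one (fun i j hij => (hdiag j).1 i hij) hQ
    fun j => ?_
  have hl' : l' j = l j := (hlead' j).unique ((hdiag j).mul hΛ.2.1 hlead)
  have hpos := (hΛQ.2.2 j).2
  rw [hl', ← transpose_apply (Λ * Q), transpose_mul, (hdiag j).mul_apply hΛ.2.1 hlead] at hpos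
  exact pos_of_mul_pos_left hpos (hΛ.2.2 j).2.le

/-- If `Λ₀` is a PLT matrix (ordered GLT with pivot rows `l j = j`) and `P` is
orthogonal, then the unique ordered GLT representation of `β = Λ₀ P` is `Λ₀`
itself: any ordered GLT matrix of the form `Λ₀ * P * G` with `G` orthogonal
equals `Λ₀`. -/
theorem glt_representation_of_PLT {m r : ℕ} (hrm : r ≤ m)
    (Λ₀ : Matrix (Fin m) (Fin r) ℝ)
    (hPLT : IsOrderedGLTWithPivots Λ₀ (Fin.castLE hrm))
    (P : Matrix (Fin r) (Fin r) ℝ) (hP : P * Pᵀ = 1) :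
    ∀ G : Matrix (Fin r) (Fin r) ℝ, G * Gᵀ = 1 →
      IsOrderedGLT (Λ₀ * P * G) → Λ₀ * P * G = Λ₀ := by
  rintro G hG ⟨l, hGLT⟩
  have hPG : P * G * (P * G)ᵀ = 1 := by
    rw [transpose_mul, Matrix.mul_assoc, ← Matrix.mul_assoc G, hG, Matrix.one_mul, hP]
  rw [Matrix.mul_assoc] at hGLT ⊢
  rw [hPLT.eq_one_of_mul_s4 hPG hGLT, Matrix.mul_one]
end

section
/- Let δ be an m×r binary matrix with unordered GLT structure (pairwise distinct pivot rows) that satisfies the counting rule CR(r,s), and let N be the number of ones in δ. Parametrize the matrices with sparsity pattern δ by vectors x ∈ ℝ^N, where Λ(x) is the m×r matrix whose entries at the positions of ones of δ are the coordinates of x and whose other entries are zero. Then the set of x ∈ ℝ^N for which Λ(x) violates the extended row deletion property RD(r,s) has Lebesgue measure zero; consequently RD(r,s) holds for all Λ̃ ∈ Θ_δ except for a set of measure zero. -/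
open Matrix

open Classical in
/-- The counting rule `CR(r,s)`: every submatrix formed by a nonempty set `S` of
columns has at least `2 * |S| + s` nonzero rows. -/
def CR {I : Type*} [Fintype I] {r : ℕ} (δ : Matrix I (Fin r) Bool) (s : ℕ) : Prop :=
  ∀ S : Finset (Fin r), S.Nonempty →
    2 * S.card + s ≤ (Finset.univ.filter fun i : I => ∃ j ∈ S, δ i j = true).card

/-- The extended row deletion property `RD(r,s)`: whenever any `s` rows are
deleted, the remaining rows contain two disjoint submatrices of rank `r`. -/
def RD {m r : ℕ} (Λ : Matrix (Fin m) (Fin r) ℝ) (s : ℕ) : Prop :=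
  ∀ D : Finset (Fin m), D.card = s →
    ∃ A B : Finset (Fin m), Disjoint A B ∧ Disjoint A D ∧ Disjoint B D ∧
      (Λ.submatrix (fun i : {i : Fin m // i ∈ A} => (i : Fin m)) id).rank = r ∧
      (Λ.submatrix (fun i : {i : Fin m // i ∈ B} => (i : Fin m)) id).rank = r

/-- A binary matrix with unordered GLT structure: pairwise distinct pivot rows. -/
def IsGLTBool {m r : ℕ} (δ : Matrix (Fin m) (Fin r) Bool) : Prop :=
  ∃ l : Fin r → Fin m, Function.Injective l ∧
    ∀ j : Fin r, δ (l j) j = true ∧ ∀ i : Fin m, i < l j → δ i j = false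

/-- The matrix with sparsity pattern `δ` whose entries at the positions of the
ones of `δ` are the coordinates of the parameter vector `x`. -/
def matrixOfPattern {m r : ℕ} (δ : Matrix (Fin m) (Fin r) Bool)
    (x : {p : Fin m × Fin r // δ p.1 p.2 = true} → ℝ) : Matrix (Fin m) (Fin r) ℝ :=
  Matrix.of fun i j => if h : δ i j = true then x ⟨(i, j), h⟩ else 0

/-!
Fix the deleted rows `D`, `|D| = s`. The counting rule `CR(r,s)` yields Hall's condition for
assigning to every column two rows, all distinct, outside `D`, with nonzero pattern entries. The
two resulting `r × r` submatrices have determinants that are nonzero polynomials in `x`, so they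
vanish only on a Lebesgue-null set; off this set both submatrices have rank `r`. There are finitely
many `D`.
-/

open MeasureTheory

namespace MvPolynomial

theorem volume_setOf_eval_eq_zero_fin : ∀ {n : ℕ} {p : MvPolynomial (Fin n) ℝ}, p ≠ 0 →
    volume {x : Fin n → ℝ | eval x p = 0} = 0
  | 0, p, hp => by
    obtain ⟨c, rfl⟩ := C_surjective (Fin 0) p
    have hc : c ≠ 0 := by rintro rfl; exact hp C_0
    simp [hc]
  | n + 1, p, hp => by
    -- Fubini, slicing along coordinate `0`: for almost every `y` the leading coefficient of `p`
    -- in `x 0` does not vanish at `y`, so the slice is the finite root set of a nonzero polynomial.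
    set q := finSuccEquiv ℝ n p
    have hq : q ≠ 0 := (map_ne_zero_iff _ (finSuccEquiv ℝ n).injective).2 hp
    have hS : MeasurableSet {x : Fin (n + 1) → ℝ | eval x p = 0} :=
      measurableSet_eq_fun (continuous_eval p).measurable measurable_const
    have hcons := (volume_preserving_piFinSuccAbove (fun _ => ℝ) 0).symm.comp
      (Measure.measurePreserving_swap (μ := (volume : Measure (Fin n → ℝ))) (ν := volume))
    rw [← hcons.measure_preimage hS.nullMeasurableSet,
      Measure.measure_prod_null (hcons.measurable hS)]
    have hlead : ∀ᵐ y : Fin n → ℝ, eval y q.leadingCoeff ≠ 0 := by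
      rw [ae_iff]; simpa using volume_setOf_eval_eq_zero_fin (Polynomial.leadingCoeff_ne_zero.2 hq)
    filter_upwards [hlead] with y hy
    have hqy : q.map (eval y) ≠ 0 := fun h => hy (by
      simpa [h] using (Polynomial.coeff_map (eval y) (p := q) q.natDegree).symm)
    refine measure_mono_null (fun t ht => ?_)
      ((Polynomial.finite_setOfPred_isRoot hqy).measure_zero _)
    simp only [MeasurableEquiv.piFinSuccAbove, Fin.insertNthEquiv_zero, MeasurableEquiv.symm_mk,
      Equiv.symm_symm, MeasurableEquiv.coe_mk, Set.preimage_ofPred_eq, Function.comp_apply,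
      Prod.swap_prod_mk, Set.mem_ofPred_eq] at ht
    simpa [Polynomial.IsRoot, q] using (eval_eq_eval_mv_eval' y t p).symm.trans ht

theorem ae_eval_ne_zero {ι : Type*} [Fintype ι] {p : MvPolynomial ι ℝ} (hp : p ≠ 0) :
    ∀ᵐ x : ι → ℝ, eval x p ≠ 0 := by
  let e := Fintype.equivFin ι
  have hS : MeasurableSet {x : ι → ℝ | eval x p = 0} :=
    measurableSet_eq_fun (continuous_eval p).measurable measurable_const
  have he := (volume_measurePreserving_piCongrLeft (fun _ : Fin (Fintype.card ι) => ℝ) e).symm _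
  simp only [ae_iff, not_not]
  rw [← he.measure_preimage hS.nullMeasurableSet]
  refine measure_mono_null (fun y hy => ?_)
    (volume_setOf_eval_eq_zero_fin ((rename_injective e e.injective).ne hp))
  simp only [Set.preimage_ofPred_eq, Set.mem_ofPred_eq, eval_rename] at hy ⊢
  convert hy using 3
  funext i
  simp [MeasurableEquiv.piCongrLeft]

end MvPolynomial

namespace Matrix

variable {ι n K : Type*} [Field K] [Fintype n] [DecidableEq n]

theorem rank_submatrix_subtype_eq_of_det_ne_zero {Λ : Matrix ι n K} {g : n → ι}
    (hdet : (Λ.submatrix g id).det ≠ 0) {A : Finset ι} (hA : ∀ j, g j ∈ A) :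
    (Λ.submatrix (fun i : A => (i : ι)) id).rank = Fintype.card n := by
  refine le_antisymm (rank_le_card_width _) ?_
  calc Fintype.card n = (Λ.submatrix g id).rank :=
        (rank_of_isUnit _ ((isUnit_iff_isUnit_det _).2 hdet.isUnit)).symm
    _ = ((Λ.submatrix (fun i : A => (i : ι)) id).submatrix (fun j => ⟨g j, hA j⟩) id).rank :=
        rfl
    _ ≤ _ := rank_submatrix_le _ _ _

theorem exists_disjoint_rank_eq_of_det_ne_zero [DecidableEq ι] {r : ℕ} {Λ : Matrix ι (Fin r) K}
    {D : Finset ι} {f : Fin r × Fin 2 → ι}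
    (hf : Function.Injective f) (hfD : ∀ jb, f jb ∉ D)
    (hdet : ∀ b, (Λ.submatrix (fun j => f (j, b)) id).det ≠ 0) :
    ∃ A B : Finset ι, Disjoint A B ∧ Disjoint A D ∧ Disjoint B D ∧
      (Λ.submatrix (fun i : {i : ι // i ∈ A} => (i : ι)) id).rank = r ∧
      (Λ.submatrix (fun i : {i : ι // i ∈ B} => (i : ι)) id).rank = r := by
  set rows : Fin 2 → Finset ι := fun b => Finset.univ.image fun j => f (j, b)
  have hrows : ∀ b, Disjoint (rows b) D := fun b =>
    Finset.disjoint_left.2 fun i hi => by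
      obtain ⟨j, -, rfl⟩ := Finset.mem_image.1 hi
      exact hfD (j, b)
  have hrank : ∀ b, (Λ.submatrix (fun i : {i : ι // i ∈ rows b} => (i : ι)) id).rank = r :=
    fun b => by
      simpa using rank_submatrix_subtype_eq_of_det_ne_zero (hdet b)
        fun j => Finset.mem_image_of_mem (fun j => f (j, b)) (Finset.mem_univ j)
  refine ⟨rows 0, rows 1, Finset.disjoint_left.2 fun i hi₀ hi₁ => ?_,
    hrows 0, hrows 1, hrank 0, hrank 1⟩
  obtain ⟨j, -, rfl⟩ := Finset.mem_image.1 hi₀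
  obtain ⟨k, -, hk⟩ := Finset.mem_image.1 hi₁
  simpa using congrArg Prod.snd (hf hk)

end Matrix

open Classical in
theorem CR.exists_injective_avoiding {I : Type*} [Fintype I] {r s : ℕ}
    {δ : Matrix I (Fin r) Bool} (hcr : CR δ s) {D : Finset I} (hD : D.card ≤ s) :
    ∃ f : Fin r × Fin 2 → I,
      Function.Injective f ∧ ∀ jb, δ (f jb) jb.1 = true ∧ f jb ∉ D := by
  set t : Fin r × Fin 2 → Finset I :=
    fun jb => Finset.univ.filter fun i => δ i jb.1 = true ∧ i ∉ D
  suffices hall : ∀ J : Finset (Fin r × Fin 2), J.card ≤ (J.biUnion t).card by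
    obtain ⟨f, hf, hft⟩ := (Finset.all_card_le_biUnion_card_iff_exists_injective t).1 hall
    exact ⟨f, hf, fun jb => (Finset.mem_filter.1 (hft jb)).2⟩
  intro J
  rcases J.eq_empty_or_nonempty with rfl | hJ
  · simp
  set S := J.image Prod.fst
  have hcrS := hcr S (hJ.image _)
  set rowsS := Finset.univ.filter fun i => ∃ j ∈ S, δ i j = true
  have hrows : rowsS \ D ⊆ J.biUnion t := by
    intro i hi
    obtain ⟨⟨-, j, hjS, hij⟩, hiD⟩ := Finset.mem_sdiff.1 hi |>.imp_left Finset.mem_filter.1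
    obtain ⟨jb, hjb, rfl⟩ := Finset.mem_image.1 hjS
    exact Finset.mem_biUnion.2 ⟨jb, hjb, Finset.mem_filter.2 ⟨Finset.mem_univ _, hij, hiD⟩⟩
  calc J.card ≤ (S ×ˢ (Finset.univ : Finset (Fin 2))).card :=
        Finset.card_le_card fun jb hjb =>
          Finset.mem_product.2 ⟨Finset.mem_image_of_mem _ hjb, Finset.mem_univ _⟩
    _ = 2 * S.card := by rw [Finset.card_product, Finset.card_univ, Fintype.card_fin, mul_comm]
    _ ≤ rowsS.card - D.card := by omega
    _ ≤ (rowsS \ D).card := Finset.le_card_sdiff _ _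
    _ ≤ (J.biUnion t).card := Finset.card_le_card hrows

section GenericPattern

variable {m r : ℕ} (δ : Matrix (Fin m) (Fin r) Bool)

noncomputable def genericMatrixOfPattern :
    Matrix (Fin m) (Fin r) (MvPolynomial {p : Fin m × Fin r // δ p.1 p.2 = true} ℝ) :=
  Matrix.of fun i j => if h : δ i j = true then MvPolynomial.X ⟨(i, j), h⟩ else 0

theorem eval_det_genericMatrixOfPattern_submatrix (g : Fin r → Fin m)
    (x : {p : Fin m × Fin r // δ p.1 p.2 = true} → ℝ) :
    MvPolynomial.eval x ((genericMatrixOfPattern δ).submatrix g id).det =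
      ((matrixOfPattern δ x).submatrix g id).det := by
  rw [RingHom.map_det, RingHom.mapMatrix_apply]
  congr 1
  ext j k
  by_cases h : δ (g j) k = true <;> simp [genericMatrixOfPattern, matrixOfPattern, h]

variable {δ}

/-- Evaluating at the indicator of the positions `(g j, j)` gives the identity matrix. -/
theorem det_genericMatrixOfPattern_submatrix_ne_zero {g : Fin r → Fin m}
    (hg : Function.Injective g) (hδ : ∀ j, δ (g j) j = true) :
    ((genericMatrixOfPattern δ).submatrix g id).det ≠ 0 := by
  intro h
  set x₀ : {p : Fin m × Fin r // δ p.1 p.2 = true} → ℝ :=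
    fun p => if p.1.1 = g p.1.2 then 1 else 0
  have hone : (matrixOfPattern δ x₀).submatrix g id = 1 := by
    ext j k
    by_cases hjk : j = k
    · subst hjk; simp [matrixOfPattern, hδ j, x₀]
    · simp [matrixOfPattern, Matrix.one_apply_ne hjk, hg.ne hjk, x₀]
  simpa [hone, h] using eval_det_genericMatrixOfPattern_submatrix δ g x₀

theorem ae_det_matrixOfPattern_submatrix_ne_zero {g : Fin r → Fin m}
    (hg : Function.Injective g) (hδ : ∀ j, δ (g j) j = true) :
    ∀ᵐ x, ((matrixOfPattern δ x).submatrix g id).det ≠ 0 := by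
  filter_upwards
    [MvPolynomial.ae_eval_ne_zero (det_genericMatrixOfPattern_submatrix_ne_zero hg hδ)] with x hx
  rwa [eval_det_genericMatrixOfPattern_submatrix] at hx

end GenericPattern

theorem CR_implies_RD_ae_general {m r s : ℕ}
    (δ : Matrix (Fin m) (Fin r) Bool) (hcr : CR δ s) :
    MeasureTheory.volume
      {x : {p : Fin m × Fin r // δ p.1 p.2 = true} → ℝ |
        ¬ RD (matrixOfPattern δ x) s} = 0 := by
  rw [← ae_iff]
  refine ae_all_iff.2 fun D => ?_
  by_cases hD : D.card = s
  · obtain ⟨f, hf, hfδ⟩ := hcr.exists_injective_avoiding hD.le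
    have hdet (b : Fin 2) := ae_det_matrixOfPattern_submatrix_ne_zero (δ := δ)
      (g := fun j => f (j, b)) (fun j k h => congrArg Prod.fst (hf h)) fun j => (hfδ (j, b)).1
    filter_upwards [hdet 0, hdet 1] with x h₀ h₁ _
    exact Matrix.exists_disjoint_rank_eq_of_det_ne_zero hf (fun jb => (hfδ jb).2)
      (Fin.forall_fin_two.2 ⟨h₀, h₁⟩)
  · exact Filter.Eventually.of_forall fun _ h => absurd h hD

/-- Theorem 3(b): if a binary matrix `δ` with unordered GLT structure satisfies
the counting rule `CR(r,s)`, then, in the parametrization of the matrices with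
sparsity pattern `δ` by the vector `x` of entries at the positions of the ones
of `δ`, the set of `x` whose matrix violates the extended row deletion property
`RD(r,s)` has Lebesgue measure zero. -/
theorem CR_implies_RD_ae {m r s : ℕ}
    (δ : Matrix (Fin m) (Fin r) Bool) (hglt : IsGLTBool δ) (hcr : CR δ s) :
    MeasureTheory.volume
      {x : {p : Fin m × Fin r // δ p.1 p.2 = true} → ℝ |
        ¬ RD (matrixOfPattern δ x) s} = 0 :=
  CR_implies_RD_ae_general δ hcr
end

section
/- Let δ be an m×r binary matrix with unordered GLT structure and r ≤ 4. If δ satisfies the four conditions (i) every column has at least 2+s nonzero entries, (ii) every pair of distinct columns has at least 4+s rows that are nonzero in at least one of the two columns, (iii) δ has at least 2r+s nonzero rows, and (iv) every submatrix obtained by deleting one column has at least 2(r−1)+s nonzero rows, then δ satisfies the counting rule CR(r,s). -/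
open Matrix

/-!
For at most four columns every nonempty set of columns is a singleton, a pair, the set of all
columns, or the set of all columns but one, and conditions (i)–(iv) are exactly `CR(r,s)`
for these four kinds of sets.
-/

theorem Finset.exists_eq_singleton_or_pair_or_compl_singleton_or_univ {α : Type*} [Fintype α]
    [DecidableEq α] (hα : Fintype.card α ≤ 4) {S : Finset α} (hS : S.Nonempty) :
    (∃ j, S = {j}) ∨ (∃ j k, j ≠ k ∧ S = {j, k}) ∨ (∃ j, S = {j}ᶜ) ∨ S = Finset.univ := by
  have hSα : S.card ≤ Fintype.card α := S.card_le_univ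
  obtain hS1 | hS2 | hS3 : S.card = 1 ∨ S.card = 2 ∨ 3 ≤ S.card := by
    have := hS.card_pos
    omega
  · exact Or.inl (Finset.card_eq_one.mp hS1)
  · exact Or.inr (Or.inl (Finset.card_eq_two.mp hS2))
  · obtain hfull | hcompl : Sᶜ.card = 0 ∨ Sᶜ.card = 1 := by
      rw [Finset.card_compl]
      omega
    · exact Or.inr (Or.inr (Or.inr (Finset.compl_eq_empty_iff S |>.mp
        (Finset.card_eq_zero.mp hfull))))
    · obtain ⟨j, hj⟩ := Finset.card_eq_one.mp hcompl
      exact Or.inr (Or.inr (Or.inl ⟨j, by rw [← hj, compl_compl]⟩))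

open Classical in
theorem simple_counting_rules_sufficient_general {m r s : ℕ} (hr : r ≤ 4)
    (δ : Matrix (Fin m) (Fin r) Bool)
    (h1 : ∀ j : Fin r, 2 + s ≤ (Finset.univ.filter fun i : Fin m => δ i j = true).card)
    (h2 : ∀ j k : Fin r, j ≠ k →
      4 + s ≤ (Finset.univ.filter fun i : Fin m => δ i j = true ∨ δ i k = true).card)
    (h3 : 2 * r + s ≤ (Finset.univ.filter fun i : Fin m => ∃ j : Fin r, δ i j = true).card)
    (h4 : ∀ j : Fin r,
      2 * (r - 1) + s ≤
        (Finset.univ.filter fun i : Fin m => ∃ k : Fin r, k ≠ j ∧ δ i k = true).card) :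
    CR δ s := by
  intro S hS
  rcases Finset.exists_eq_singleton_or_pair_or_compl_singleton_or_univ
      (by rwa [Fintype.card_fin]) hS with ⟨j, rfl⟩ | ⟨j, k, hjk, rfl⟩ | ⟨j, rfl⟩ | rfl
  · simpa using h1 j
  · simpa [Finset.card_pair hjk, or_and_right, exists_or] using h2 j k hjk
  · simpa [Finset.card_compl] using h4 j
  · simpa using h3

open Classical in
/-- Corollary 2, sufficiency for `r ≤ 4`: if a binary GLT matrix `δ` with at
most four columns satisfies the four simple conditions (every column has at
least `2+s` nonzero entries; every pair of distinct columns covers at least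
`4+s` nonzero rows; `δ` has at least `2r+s` nonzero rows; deleting any one
column leaves at least `2(r-1)+s` nonzero rows), then `δ` satisfies `CR(r,s)`. -/
theorem simple_counting_rules_sufficient {m r s : ℕ} (hr : r ≤ 4)
    (δ : Matrix (Fin m) (Fin r) Bool) (hglt : IsGLTBool δ)
    (h1 : ∀ j : Fin r, 2 + s ≤ (Finset.univ.filter fun i : Fin m => δ i j = true).card)
    (h2 : ∀ j k : Fin r, j ≠ k →
      4 + s ≤ (Finset.univ.filter fun i : Fin m => δ i j = true ∨ δ i k = true).card)
    (h3 : 2 * r + s ≤ (Finset.univ.filter fun i : Fin m => ∃ j : Fin r, δ i j = true).card)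
    (h4 : ∀ j : Fin r,
      2 * (r - 1) + s ≤
        (Finset.univ.filter fun i : Fin m => ∃ k : Fin r, k ≠ j ∧ δ i k = true).card) :
    CR δ s :=
  simple_counting_rules_sufficient_general hr δ h1 h2 h3 h4
end

section
/- Let M be a real m×s matrix with full column rank s such that D = M Mᵀ is a diagonal matrix. Then exactly s diagonal entries of D are nonzero, say d_{n_1}, …, d_{n_s} in rows n_1 < ⋯ < n_s; a row M_{i,•} of M is nonzero if and only if i ∈ {n_1, …, n_s}; and the s×s submatrix M_0 of M formed by rows n_1, …, n_s satisfies M_0 = D_0 Q, where D_0 = diag(√d_{n_1}, …, √d_{n_s}) and Q is an s×s orthogonal matrix. -/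
/-!
Since `M Mᵀ` is diagonal, its rank `s` is the number of its nonzero diagonal entries, and its
`i`-th diagonal entry is `‖M_{i,•}‖²`, which vanishes exactly when the row does. On the rows
`n_1 < ⋯ < n_s` that remain, the rows of `M₀` are pairwise orthogonal with squared norms
`d_{n_j}`, so dividing each by its norm gives a matrix `Q` with orthonormal rows.
-/

open Matrix

namespace Matrix

theorem mul_transpose_self_apply_self_eq_zero_iff {m n R : Type*} [Fintype n] [Ring R]
    [LinearOrder R] [IsStrictOrderedRing R] (M : Matrix m n R) (i : m) :
    (M * Mᵀ) i i = 0 ↔ M i = 0 :=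
  dotProduct_self_eq_zero

theorem IsDiag.card_filter_diag_ne_zero {m K : Type*} [Fintype m] [DecidableEq m] [Field K]
    [DecidableEq K] {A : Matrix m m K} (hA : A.IsDiag) :
    (Finset.univ.filter fun i => A i i ≠ 0).card = A.rank := by
  conv_rhs => rw [← hA.diagonal_diag]
  rw [rank_diagonal, Fintype.card_subtype]
  rfl

theorem exists_eq_diagonal_sqrt_mul_of_isDiag {ι κ : Type*} [Fintype ι] [Fintype κ]
    [DecidableEq ι] (A : Matrix ι κ ℝ) (hA : (A * Aᵀ).IsDiag) (hA₀ : ∀ i, (A * Aᵀ) i i ≠ 0) :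
    ∃ Q : Matrix ι κ ℝ, Q * Qᵀ = 1 ∧
      A = diagonal (fun i => √((A * Aᵀ) i i)) * Q := by
  set d : ι → ℝ := fun i => (A * Aᵀ) i i
  have hd : ∀ i, 0 < d i := fun i =>
    (Finset.sum_nonneg fun _ _ => mul_self_nonneg _).lt_of_ne' (hA₀ i)
  set r : ι → ℝ := fun i => (√(d i))⁻¹
  refine ⟨diagonal r * A, ?_, ?_⟩
  · calc diagonal r * A * (diagonal r * A)ᵀ = diagonal r * (A * Aᵀ) * diagonal r := by
          rw [transpose_mul, diagonal_transpose, Matrix.mul_assoc, Matrix.mul_assoc,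
            Matrix.mul_assoc]
      _ = diagonal (fun i => r i * d i * r i) := by
          rw [← hA.diagonal_diag, diagonal_mul_diagonal, diagonal_mul_diagonal]
          rfl
      _ = 1 := by
          rw [← diagonal_one]
          congr 1
          funext i
          rw [mul_comm, ← mul_assoc, ← mul_inv, Real.mul_self_sqrt (hd i).le,
            inv_mul_cancel₀ (hd i).ne']
  · rw [← Matrix.mul_assoc, diagonal_mul_diagonal]
    conv_lhs => rw [← Matrix.one_mul A]
    rw [← diagonal_one]
    congr 2
    funext i
    exact (mul_inv_cancel₀ (Real.sqrt_pos.mpr (hd i)).ne').symm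

end Matrix

/-- Properties of spurious factor loading matrices: if `M` is an `m × s` real
matrix of full column rank `s` such that `D = M Mᵀ` is diagonal, then exactly
`s` diagonal entries of `D` are nonzero, located in rows `n 0 < ... < n (s-1)`;
a row of `M` is nonzero iff its index is one of the `n j`; and the `s × s`
submatrix `M₀` of the rows `n j` satisfies `M₀ = D₀ Q` with
`D₀ = diag(√(D (n j) (n j)))` and `Q` orthogonal. -/
theorem spurious_factor_matrix_structure {m s : ℕ}
    (M : Matrix (Fin m) (Fin s) ℝ) (hrank : M.rank = s)
    (hdiag : (M * Mᵀ).IsDiag) :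
    ∃ n : Fin s → Fin m, StrictMono n ∧
      (∀ i : Fin m, (M * Mᵀ) i i ≠ 0 ↔ ∃ j : Fin s, n j = i) ∧
      (∀ i : Fin m, (∃ j : Fin s, M i j ≠ 0) ↔ ∃ j : Fin s, n j = i) ∧
      ∃ Q : Matrix (Fin s) (Fin s) ℝ, Q * Qᵀ = 1 ∧
        M.submatrix n id =
          Matrix.diagonal (fun j : Fin s => Real.sqrt ((M * Mᵀ) (n j) (n j))) * Q := by
  classical
  set S := Finset.univ.filter fun i => (M * Mᵀ) i i ≠ 0
  have hS : S.card = s := by rw [hdiag.card_filter_diag_ne_zero, rank_self_mul_transpose, hrank]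
  set n := S.orderEmbOfFin hS
  have hn : ∀ i, (M * Mᵀ) i i ≠ 0 ↔ ∃ j, n j = i := fun i => by
    rw [← Set.mem_range, S.range_orderEmbOfFin hS, Finset.coe_filter]
    simp
  refine ⟨n, n.strictMono, hn, fun i => ?_, ?_⟩
  · rw [← hn, ne_eq, mul_transpose_self_apply_self_eq_zero_iff, funext_iff, not_forall]
    rfl
  have hsub : M.submatrix n id * (M.submatrix n id)ᵀ = (M * Mᵀ).submatrix n n := by
    rw [transpose_submatrix, ← submatrix_mul _ _ _ _ _ Function.bijective_id]
  obtain ⟨Q, hQ, hMQ⟩ := exists_eq_diagonal_sqrt_mul_of_isDiag (M.submatrix n id)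
    (hsub ▸ hdiag.submatrix n.injective) (fun j => hsub ▸ (hn (n j)).2 ⟨j, rfl⟩)
  refine ⟨Q, hQ, hMQ.trans ?_⟩
  rw [hsub]
  rfl
end

section
/- Let Λ be an m×r ordered GLT matrix and let P be an r×r orthogonal matrix such that Λ P is also an ordered GLT matrix. Then P = I_r; i.e., imposing an ordered GLT structure resolves rotational invariance: the only rotation mapping an ordered GLT matrix to an ordered GLT matrix is the identity. -/
open Matrix Finset


open Matrix

lemma aux_count {r : ℕ} (P : Matrix (Fin r) (Fin r) ℝ) (hP : P * Pᵀ = 1) (j : Fin r)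
    (hz : ∀ t k : Fin r, t ≤ j → j ≤ k → P t k = 0) : False := by
  have hPt : Pᵀ * P = 1 := by rwa [mul_eq_one_comm] at hP
  have hrow : ∀ t : Fin r, t ≤ j → ∑ k ∈ Iio j, P t k ^ 2 = 1 := by
    intro t ht
    have h1 : ∑ k : Fin r, P t k ^ 2 = 1 := by
      have := congrFun (congrFun hP t) t
      simpa [Matrix.mul_apply, Matrix.one_apply, sq] using this
    rw [← h1]
    apply Finset.sum_subset (Finset.subset_univ _)
    intro k _ hk
    have : j ≤ k := by simpa using hk
    rw [hz t k ht this]; ring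
  have hcol : ∀ k : Fin r, ∑ t : Fin r, P t k ^ 2 = 1 := by
    intro k
    have := congrFun (congrFun hPt k) k
    simpa [Matrix.mul_apply, Matrix.one_apply, sq] using this
  have h1 : ∑ t ∈ Iic j, ∑ k ∈ Iio j, P t k ^ 2 = (j : ℕ) + 1 := by
    rw [Finset.sum_congr rfl (fun t ht => hrow t (by simpa using ht))]
    simp [Fin.card_Iic]
  have h2 : ∑ k ∈ Iio j, ∑ t ∈ Iic j, P t k ^ 2 ≤ (j : ℕ) := by
    calc ∑ k ∈ Iio j, ∑ t ∈ Iic j, P t k ^ 2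
        ≤ ∑ k ∈ Iio j, ∑ t : Fin r, P t k ^ 2 := by
          apply Finset.sum_le_sum
          intro k _
          exact Finset.sum_le_sum_of_subset_of_nonneg (Finset.subset_univ _)
            (fun t _ _ => sq_nonneg _)
      _ = (j : ℕ) := by
          rw [Finset.sum_congr rfl (fun k _ => hcol k)]
          simp [Fin.card_Iio]
  rw [Finset.sum_comm] at h1
  rw [h1] at h2
  norm_num at h2

lemma pivot_le {m r : ℕ} (Λ : Matrix (Fin m) (Fin r) ℝ) (P : Matrix (Fin r) (Fin r) ℝ)
    (l l' : Fin r → Fin m) (hP : P * Pᵀ = 1)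
    (hlmono : StrictMono l)
    (hl : ∀ j : Fin r, (∀ i : Fin m, i < l j → Λ i j = 0) ∧ 0 < Λ (l j) j)
    (hl'mono : StrictMono l')
    (hl' : ∀ j : Fin r, (∀ i : Fin m, i < l' j → (Λ * P) i j = 0) ∧ 0 < (Λ * P) (l' j) j)
    (j : Fin r) : l' j ≤ l j := by
  by_contra hcon
  push_neg at hcon
  refine aux_count P hP j ?_
  intro t k ht hk
  -- for any a ≤ j and k ≥ j, (Λ*P) (l a) k = 0
  have hBz : ∀ a : Fin r, a ≤ j → (Λ * P) (l a) k = 0 := by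
    intro a ha
    refine (hl' k).1 (l a) ?_
    calc l a ≤ l j := hlmono.monotone ha
      _ < l' j := hcon
      _ ≤ l' k := hl'mono.monotone hk
  -- strong induction on t
  have key : ∀ n : ℕ, ∀ t : Fin r, t.val = n → t ≤ j → P t k = 0 := by
    intro n
    induction n using Nat.strong_induction_on with
    | _ n ih =>
      intro t htn ht
      have h0 : ∑ s : Fin r, Λ (l t) s * P s k = 0 := by
        have := hBz t ht
        simpa [Matrix.mul_apply] using this
      rw [Finset.sum_eq_single t] at h0
      · have hpos := (hl t).2
        have := mul_eq_zero.mp h0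
        rcases this with h | h
        · exact absurd h (ne_of_gt hpos)
        · exact h
      · intro s _ hs
        rcases lt_or_gt_of_ne hs with hlt | hgt
        · rw [ih s.val (htn ▸ hlt) s rfl (le_of_lt (lt_of_lt_of_le hlt ht))]; ring
        · rw [(hl s).1 (l t) (hlmono hgt)]; ring
      · intro h; exact absurd (Finset.mem_univ t) h
  exact key t.val t rfl ht

/-- Imposing an ordered GLT structure resolves rotational invariance: if `Λ` is
an ordered GLT matrix and `P` is orthogonal with `Λ P` again an ordered GLT
matrix, then `P = 1`. -/
theorem orderedGLT_resolves_rotational_invariance {m r : ℕ}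
    (Λ : Matrix (Fin m) (Fin r) ℝ) (P : Matrix (Fin r) (Fin r) ℝ)
    (hΛ : IsOrderedGLT Λ) (hP : P * Pᵀ = 1) (hΛP : IsOrderedGLT (Λ * P)) :
    P = 1 := by
  obtain ⟨l, _, hlmono, hl⟩ := hΛ
  obtain ⟨l', _, hl'mono, hl'⟩ := hΛP
  have hPt : Pᵀ * P = 1 := by rwa [mul_eq_one_comm] at hP
  have hback : (Λ * P) * Pᵀ = Λ := by rw [Matrix.mul_assoc, hP, Matrix.mul_one]
  have le1 : ∀ j, l' j ≤ l j := pivot_le Λ P l l' hP hlmono hl hl'mono hl'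
  have le2 : ∀ j, l j ≤ l' j := by
    refine pivot_le (Λ * P) Pᵀ l' l ?_ hl'mono hl' hlmono ?_
    · rwa [Matrix.transpose_transpose]
    · rwa [hback]
  have heq : ∀ j, l j = l' j := fun j => le_antisymm (le2 j) (le1 j)
  -- P is lower triangular
  have htri : ∀ t k : Fin r, t < k → P t k = 0 := by
    intro t₀ k htk
    have key : ∀ n : ℕ, ∀ t : Fin r, t.val = n → t < k → P t k = 0 := by
      intro n
      induction n using Nat.strong_induction_on with
      | _ n ih =>
        intro t htn ht
        have h0 : ∑ s : Fin r, Λ (l t) s * P s k = 0 := by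
          have : (Λ * P) (l t) k = 0 := by
            refine (hl' k).1 (l t) ?_
            rw [← heq k]
            exact hlmono ht
          simpa [Matrix.mul_apply] using this
        rw [Finset.sum_eq_single t] at h0
        · rcases mul_eq_zero.mp h0 with h | h
          · exact absurd h (ne_of_gt (hl t).2)
          · exact h
        · intro s _ hs
          rcases lt_or_gt_of_ne hs with hlt | hgt
          · rw [ih s.val (htn ▸ hlt) s rfl (lt_trans hlt ht)]; ring
          · rw [(hl s).1 (l t) (hlmono hgt)]; ring
        · intro h; exact absurd (Finset.mem_univ t) h
    exact key t₀.val t₀ rfl htk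
  -- P has positive diagonal
  have hdiag : ∀ j : Fin r, 0 < P j j := by
    intro j
    have h0 : ∑ s : Fin r, Λ (l j) s * P s j = Λ (l j) j * P j j := by
      refine Finset.sum_eq_single j ?_ ?_
      · intro s _ hs
        rcases lt_or_gt_of_ne hs with hlt | hgt
        · rw [htri s j hlt]; ring
        · rw [(hl s).1 (l j) (hlmono hgt)]; ring
      · intro h; exact absurd (Finset.mem_univ j) h
    have hpos : 0 < (Λ * P) (l' j) j := (hl' j).2
    rw [← heq j] at hpos
    rw [Matrix.mul_apply, h0] at hpos
    nlinarith [(hl j).2, hpos]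
  -- finish: lower triangular orthogonal with positive diagonal is identity
  have key : ∀ n : ℕ, ∀ t : Fin r, t.val = n → ∀ k : Fin r, P t k = (1 : Matrix (Fin r) (Fin r) ℝ) t k := by
    intro n
    induction n using Nat.strong_induction_on with
    | _ n ih =>
      intro t htn k
      have hrowlt : ∀ k' : Fin r, k' < t → P t k' = 0 := by
        intro k' hk'
        have h0 : (P * Pᵀ) t k' = 0 := by
          rw [hP, Matrix.one_apply_ne (ne_of_gt hk')]
        rw [Matrix.mul_apply] at h0
        rw [Finset.sum_eq_single k'] at h0
        · have h1 : P k' k' = 1 := by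
            have := ih k'.val (htn ▸ hk') k' rfl k'
            rwa [Matrix.one_apply_eq] at this
          rw [Matrix.transpose_apply, h1, mul_one] at h0
          exact h0
        · intro s _ hs
          have : P k' s = 0 := by
            have := ih k'.val (htn ▸ hk') k' rfl s
            rwa [Matrix.one_apply_ne (Ne.symm hs)] at this
          rw [Matrix.transpose_apply, this]; ring
        · intro h; exact absurd (Finset.mem_univ k') h
      rcases lt_trichotomy t k with h | h | h
      · rw [htri t k h, Matrix.one_apply_ne (ne_of_lt h)]
      · subst h
        rw [Matrix.one_apply_eq]
        have h1 : (P * Pᵀ) t t = 1 := by rw [hP, Matrix.one_apply_eq]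
        rw [Matrix.mul_apply] at h1
        rw [Finset.sum_eq_single t] at h1
        · rw [Matrix.transpose_apply] at h1
          nlinarith [hdiag t]
        · intro s _ hs
          rcases lt_or_gt_of_ne hs with hlt | hgt
          · rw [hrowlt s hlt]; ring
          · rw [htri t s hgt]; ring
        · intro h; exact absurd (Finset.mem_univ t) h
      · rw [hrowlt k h, Matrix.one_apply_ne (ne_of_gt h)]
  ext t k
  exact key t.val t rfl k
end
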